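/- arXiv:0908.2960 — 2 statements merged into one kernel-verified Lean document; each statement's English description precedes it below -/
import Mathlib

section
/- Fix t ≥ 1 and define the probability measure P̂ by dP̂/dP = exp(−A_t X_t ε_t − (1/2) A_t² X_t²). Then for all real numbers α_1,…,α_t and λ_1,…,λ_t: E_{P̂}[exp{i Σ_{j=1}^{t} α_j X_j + i Σ_{j=1}^{t} λ_j Y_j}] = e^{−λ_t²/2} · E_P[exp{i Σ_{j=1}^{t} α_j X_j + i Σ_{j=1}^{t−1} λ_j Y_j}]. Consequently, under P̂ the joint law of (X_1,…,X_t, Y_1,…,Y_{t−1}) is the same as under P, and Y_t is a standard N(0,1) random variable independent of (X_1,…,X_t, Y_1,…,Y_{t−1}). -/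
open MeasureTheory ProbabilityTheory Real Finset Complex
open scoped NNReal

/-- The σ-algebra `𝒴_t` generated by the observations `Y 1, …, Y t`. -/
def obsSigma {Ω : Type*} [MeasurableSpace Ω] (Y : ℕ → Ω → ℝ) (t : ℕ) : MeasurableSpace Ω :=
  ⨆ s ∈ Set.Icc 1 t, MeasurableSpace.comap (Y s) inferInstance

/-- `X` is a Gaussian process: every finite linear combination of its values has a
Gaussian distribution. -/
def IsGaussianProcess {Ω : Type*} [MeasurableSpace Ω] (P : Measure Ω) (X : ℕ → Ω → ℝ) : Prop :=
  ∀ (n : ℕ) (ts : Fin n → ℕ) (c : Fin n → ℝ), ∃ (mg : ℝ) (v : ℝ≥0),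
    P.map (fun ω => ∑ i, c i * X (ts i) ω) = gaussianReal mg v

/-!
Let `V = (X_1, …, X_t, Y_1, …, Y_{t-1})` and `c = A_t X_t`, a function of `V`. The noise `ε_t` is
standard Gaussian and independent of `V`, and `dP̂/dP = exp(-c ε_t - c²/2)`. For a fixed `c`,
tilting `N(0,1)` by `e ↦ exp(-c e - c²/2)` gives `N(-c,1)`, so `Y_t = c + ε_t` is `N(0,1)` under
`P̂`, whatever the value of `V`. Hence under `P̂` the pair `(V, Y_t)` has law `law_P(V) ⊗ N(0,1)`,
and every claim, the characteristic function identity included, is read off from this product law.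
-/

open scoped ENNReal

noncomputable def cameronMartinDensity (c e : ℝ) : ℝ≥0∞ :=
  ENNReal.ofReal (rexp (-(c * e) - c ^ 2 / 2))

lemma measurable_cameronMartinDensity : Measurable (Function.uncurry cameronMartinDensity) := by
  unfold cameronMartinDensity Function.uncurry
  fun_prop

lemma gaussianReal_withDensity_cameronMartinDensity (c : ℝ) :
    (gaussianReal 0 1).withDensity (cameronMartinDensity c) = gaussianReal (-c) 1 := by
  rw [gaussianReal_of_var_ne_zero _ one_ne_zero, gaussianReal_of_var_ne_zero _ one_ne_zero,
    ← withDensity_mul _ (measurable_gaussianPDF _ _)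
      (by unfold cameronMartinDensity; fun_prop)]
  congr 1
  ext e
  simp only [Pi.mul_apply, gaussianPDF, cameronMartinDensity, gaussianPDFReal, NNReal.coe_one]
  rw [← ENNReal.ofReal_mul (by positivity), mul_assoc, ← Real.exp_add]
  congr 3
  ring

lemma map_const_add_gaussianReal_withDensity_cameronMartinDensity (c : ℝ) :
    ((gaussianReal 0 1).withDensity (cameronMartinDensity c)).map (c + ·) = gaussianReal 0 1 := by
  rw [gaussianReal_withDensity_cameronMartinDensity, gaussianReal_map_const_add, neg_add_cancel]

lemma map_prod_gaussianReal_withDensity_cameronMartinDensity {E : Type*}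
    [MeasurableSpace E] (μ : Measure E) [SigmaFinite μ] {x : E → ℝ} (hx : Measurable x) :
    ((μ.prod (gaussianReal 0 1)).withDensity
        (fun p => cameronMartinDensity (x p.1) p.2)).map (fun p => (p.1, x p.1 + p.2))
      = μ.prod (gaussianReal 0 1) := by
  have hdens : Measurable fun p : E × ℝ => cameronMartinDensity (x p.1) p.2 :=
    measurable_cameronMartinDensity.comp ((hx.comp measurable_fst).prodMk measurable_snd)
  have hshift : Measurable fun p : E × ℝ => (p.1, x p.1 + p.2) := by fun_prop
  refine (Measure.prod_eq fun s u hs hu => ?_).symm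
  have hfiber : ∀ w, ∫⁻ e, ((fun p : E × ℝ => (p.1, x p.1 + p.2)) ⁻¹' s ×ˢ u).indicator
      (fun p => cameronMartinDensity (x p.1) p.2) (w, e) ∂gaussianReal 0 1
        = s.indicator (fun _ => gaussianReal 0 1 u) w := by
    intro w
    by_cases hw : w ∈ s
    · rw [Set.indicator_of_mem hw]
      conv_rhs => rw [← map_const_add_gaussianReal_withDensity_cameronMartinDensity (x w),
        Measure.map_apply (by fun_prop) hu, withDensity_apply _ (measurable_const_add _ hu),
        ← lintegral_indicator (measurable_const_add _ hu)]
      refine lintegral_congr fun e => ?_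
      by_cases he : x w + e ∈ u <;> simp [Set.indicator_of_mem, Set.indicator_of_notMem, hw, he]
    · simp [hw]
  rw [Measure.map_apply hshift (hs.prod hu), withDensity_apply _ (hshift (hs.prod hu)),
    ← lintegral_indicator (hshift (hs.prod hu)),
    lintegral_prod _ (hdens.indicator (hshift (hs.prod hu))).aemeasurable]
  simp_rw [hfiber]
  rw [lintegral_indicator_const hs, mul_comm]

section

variable {Ω : Type*} [MeasurableSpace Ω] {P : Measure Ω}

lemma map_withDensity_comp {F : Type*} [MeasurableSpace F] {Z : Ω → F} (hZ : Measurable Z)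
    {f : F → ℝ≥0∞} (hf : Measurable f) :
    (P.withDensity (f ∘ Z)).map Z = (P.map Z).withDensity f := by
  ext s hs
  rw [Measure.map_apply hZ hs, withDensity_apply _ (hZ hs), withDensity_apply _ hs,
    setLIntegral_map hs hf hZ]
  rfl

lemma map_eq_and_indepFun_of_map_prodMk_eq_prod {F G : Type*} [MeasurableSpace F]
    [MeasurableSpace G] {f : Ω → F} {g : Ω → G} (hf : Measurable f) (hg : Measurable g)
    {μ : Measure F} {ν : Measure G} [IsProbabilityMeasure μ] [IsProbabilityMeasure ν]
    (h : P.map (fun ω => (f ω, g ω)) = μ.prod ν) :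
    P.map f = μ ∧ P.map g = ν ∧ IndepFun f g P := by
  have : IsProbabilityMeasure (P.map fun ω => (f ω, g ω)) := h ▸ inferInstance
  have := Measure.isProbabilityMeasure_of_map (μ := P) fun ω => (f ω, g ω)
  have hf_law : P.map f = μ := by
    have := congrArg (Measure.map Prod.fst) h
    rwa [Measure.map_map measurable_fst (hf.prodMk hg), Measure.map_fst_prod, measure_univ,
      one_smul] at this
  have hg_law : P.map g = ν := by
    have := congrArg (Measure.map Prod.snd) h
    rwa [Measure.map_map measurable_snd (hf.prodMk hg), Measure.map_snd_prod, measure_univ,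
      one_smul] at this
  refine ⟨hf_law, hg_law, ?_⟩
  rw [indepFun_iff_map_prod_eq_prod_map_map hf.aemeasurable hg.aemeasurable, hf_law, hg_law, h]

lemma integral_mul_of_map_prodMk_eq_prod {E G : Type*} [MeasurableSpace E] [MeasurableSpace G]
    [SFinite P] {Q : Measure Ω} {ν : Measure G} [SFinite ν]
    {V : Ω → E} {Z : Ω → G} (hV : Measurable V) (hZ : Measurable Z)
    (h : Q.map (fun ω => (V ω, Z ω)) = (P.map V).prod ν)
    {F : E → ℂ} {H : G → ℂ} (hF : Measurable F) (hH : Measurable H) :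
    ∫ ω, F (V ω) * H (Z ω) ∂Q = (∫ ω, F (V ω) ∂P) * ∫ y, H y ∂ν := by
  have hFH : Measurable fun p : E × G => F p.1 * H p.2 := by fun_prop
  rw [← integral_map (hV.prodMk hZ).aemeasurable hFH.aestronglyMeasurable, h, integral_prod_mul,
    integral_map hV.aemeasurable hF.aestronglyMeasurable]

lemma ProbabilityTheory.IndepFun.prodMk_left_of_indepFun [IsFiniteMeasure P] {α β γ : Type*}
    [MeasurableSpace α] [MeasurableSpace β] [MeasurableSpace γ] {f : Ω → α} {g : Ω → β}
    {h : Ω → γ} (hf_gh : IndepFun f (fun ω => (g ω, h ω)) P) (hgh : IndepFun g h P)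
    (hf : Measurable f) (hg : Measurable g) (hh : Measurable h) :
    IndepFun (fun ω => (f ω, g ω)) h P := by
  have hfg : IndepFun f g P := hf_gh.comp measurable_id measurable_fst
  have hlaw : P.map (fun ω => (f ω, (g ω, h ω))) = (P.map f).prod ((P.map g).prod (P.map h)) := by
    rw [← (indepFun_iff_map_prod_eq_prod_map_map hg.aemeasurable hh.aemeasurable).mp hgh]
    exact (indepFun_iff_map_prod_eq_prod_map_map hf.aemeasurable (hg.prodMk hh).aemeasurable).mp
      hf_gh
  have hassoc : (fun ω => ((f ω, g ω), h ω))
      = MeasurableEquiv.prodAssoc.symm ∘ fun ω => (f ω, (g ω, h ω)) := rfl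
  rw [indepFun_iff_map_prod_eq_prod_map_map (hf.prodMk hg).aemeasurable hh.aemeasurable,
    (indepFun_iff_map_prod_eq_prod_map_map hf.aemeasurable hg.aemeasurable).mp hfg, hassoc,
    ← Measure.map_map MeasurableEquiv.prodAssoc.symm.measurable (hf.prodMk (hg.prodMk hh)), hlaw,
    ← Measure.prodAssoc_prod, MeasurableEquiv.map_symm_map]

lemma ProbabilityTheory.iIndepFun.indepFun_pi_of_ne {ι β : Type*} [MeasurableSpace β]
    {f : ι → Ω → β} (hf : iIndepFun f P) (hf_meas : ∀ i, Measurable (f i)) {n : ℕ}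
    (g : Fin n → ι) {i : ι} (hg : ∀ j, g j ≠ i) :
    IndepFun (fun ω j => f (g j) ω) (f i) P := by
  classical
  have hdisj : Disjoint (univ.image g) {i} := by simpa using hg
  exact (hf.indepFun_finset _ _ hdisj hf_meas).comp
    (measurable_pi_lambda _ fun j => measurable_pi_apply ⟨g j, mem_image_of_mem g (mem_univ j)⟩)
    (measurable_pi_apply ⟨i, mem_singleton_self i⟩)

lemma map_prodMk_withDensity_cameronMartinDensity {E : Type*} [MeasurableSpace E]
    [IsFiniteMeasure P] {W : Ω → E} {e : Ω → ℝ} (hW : Measurable W) (he : Measurable e)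
    (hind : IndepFun W e P) (he_law : P.map e = gaussianReal 0 1) {x : E → ℝ} (hx : Measurable x) :
    (P.withDensity fun ω => cameronMartinDensity (x (W ω)) (e ω)).map
        (fun ω => (W ω, x (W ω) + e ω))
      = (P.map W).prod (gaussianReal 0 1) := by
  have hjoint : P.map (fun ω => (W ω, e ω)) = (P.map W).prod (gaussianReal 0 1) := by
    rw [← he_law]
    exact (indepFun_iff_map_prod_eq_prod_map_map hW.aemeasurable he.aemeasurable).mp hind
  have hshift : Measurable fun p : E × ℝ => (p.1, x p.1 + p.2) := by fun_prop
  have hdens : Measurable fun p : E × ℝ => cameronMartinDensity (x p.1) p.2 :=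
    measurable_cameronMartinDensity.comp ((hx.comp measurable_fst).prodMk measurable_snd)
  have h := congrArg (Measure.map fun p : E × ℝ => (p.1, x p.1 + p.2))
    (map_withDensity_comp (P := P) (hW.prodMk he) hdens)
  rwa [Measure.map_map hshift (hW.prodMk he), hjoint,
    map_prod_gaussianReal_withDensity_cameronMartinDensity _ hx] at h

end

lemma Finset.sum_Icc_one_eq_sum_fin {M : Type*} [AddCommMonoid M] (f : ℕ → M) (n : ℕ) :
    ∑ j ∈ Icc 1 n, f j = ∑ j : Fin n, f (j + 1) := by
  rw [Fin.sum_univ_eq_sum_range (fun j => f (j + 1)), range_eq_Ico, sum_Ico_add', zero_add,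
    Ico_add_one_right_eq_Icc]

def signalObsHistory {Ω : Type*} (X Y : ℕ → Ω → ℝ) (t : ℕ) (ω : Ω) :
    (Fin t → ℝ) × (Fin (t - 1) → ℝ) :=
  ((fun j : Fin t => X (j.1 + 1) ω), (fun j : Fin (t - 1) => Y (j.1 + 1) ω))

section SignalObservation

variable {Ω : Type*} [MeasurableSpace Ω] {P : Measure Ω} {X ε Y : ℕ → Ω → ℝ} {A : ℕ → ℝ}

lemma measurable_signalObsHistory (hX : ∀ s, Measurable (X s)) (hY : ∀ s, Measurable (Y s))
    (t : ℕ) : Measurable (signalObsHistory X Y t) := by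
  unfold signalObsHistory
  fun_prop

lemma measurable_observation (hX : ∀ s, Measurable (X s)) (hε : ∀ s, Measurable (ε s))
    (hY : ∀ s ω, Y s ω = A s * X s ω + ε s ω) (s : ℕ) : Measurable (Y s) := by
  rw [funext (hY s)]
  fun_prop

lemma indepFun_signalObsHistory_noise [IsFiniteMeasure P] (hX : ∀ s, Measurable (X s))
    (hε : ∀ s, Measurable (ε s)) (hε_indep : iIndepFun ε P)
    (hXε : IndepFun (fun ω s => X s ω) (fun ω s => ε s ω) P)
    (hY : ∀ s ω, Y s ω = A s * X s ω + ε s ω) (t : ℕ) :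
    IndepFun (signalObsHistory X Y t) (ε t) P := by
  have hpast : IndepFun (fun ω (j : Fin (t - 1)) => ε (j + 1) ω) (ε t) P :=
    hε_indep.indepFun_pi_of_ne hε _ fun j => by omega
  have hX_noise : IndepFun (fun ω s => X s ω)
      (fun ω => ((fun j : Fin (t - 1) => ε (j + 1) ω), ε t ω)) P :=
    hXε.comp (φ := id) (ψ := fun e : ℕ → ℝ => ((fun j : Fin (t - 1) => e (j + 1)), e t))
      measurable_id (by fun_prop)
  have hhistory : signalObsHistory X Y t = (fun p : (ℕ → ℝ) × (Fin (t - 1) → ℝ) =>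
      ((fun j : Fin t => p.1 (j + 1)), fun j : Fin (t - 1) => A (j + 1) * p.1 (j + 1) + p.2 j))
        ∘ fun ω => ((fun s => X s ω), fun j : Fin (t - 1) => ε (j + 1) ω) := by
    funext ω
    simp [signalObsHistory, hY]
  rw [hhistory]
  exact (hX_noise.prodMk_left_of_indepFun hpast (by fun_prop) (by fun_prop) (hε t)).comp
    (by fun_prop) measurable_id

lemma map_signalObsHistory_prodMk_withDensity [IsFiniteMeasure P]
    (hX : ∀ s, Measurable (X s)) (hε : ∀ s, Measurable (ε s))
    (hε_law : ∀ s, P.map (ε s) = gaussianReal 0 1) (hε_indep : iIndepFun ε P)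
    (hXε : IndepFun (fun ω s => X s ω) (fun ω s => ε s ω) P)
    (hY : ∀ s ω, Y s ω = A s * X s ω + ε s ω) {t : ℕ} (ht : 1 ≤ t) :
    (P.withDensity fun ω =>
        ENNReal.ofReal (rexp (-(A t * X t ω * ε t ω) - 1 / 2 * A t ^ 2 * X t ω ^ 2))).map
      (fun ω => (signalObsHistory X Y t ω, Y t ω))
      = (P.map (signalObsHistory X Y t)).prod (gaussianReal 0 1) := by
  have hYmeas := measurable_observation hX hε hY
  let x : (Fin t → ℝ) × (Fin (t - 1) → ℝ) → ℝ := fun v => A t * v.1 ⟨t - 1, by omega⟩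
  have hx : ∀ ω, x (signalObsHistory X Y t ω) = A t * X t ω := fun ω => by
    simp [x, signalObsHistory, Nat.sub_add_cancel ht]
  have hdensity : (fun ω =>
      ENNReal.ofReal (rexp (-(A t * X t ω * ε t ω) - 1 / 2 * A t ^ 2 * X t ω ^ 2)))
        = fun ω => cameronMartinDensity (x (signalObsHistory X Y t ω)) (ε t ω) := by
    funext ω
    rw [hx, cameronMartinDensity]
    congr 2
    ring
  have hYt : (fun ω => (signalObsHistory X Y t ω, Y t ω))
      = fun ω => (signalObsHistory X Y t ω, x (signalObsHistory X Y t ω) + ε t ω) := by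
    simp only [hx, hY]
  rw [hdensity, hYt]
  exact map_prodMk_withDensity_cameronMartinDensity (measurable_signalObsHistory hX hYmeas t)
    (hε t) (indepFun_signalObsHistory_noise hX hε hε_indep hXε hY t) (hε_law t) (by fun_prop)

lemma integral_cexp_of_map_signalObsHistory_prodMk_eq_prod {Q : Measure Ω} [SFinite P]
    (hX : ∀ s, Measurable (X s)) (hY : ∀ s, Measurable (Y s)) {t : ℕ} (ht : 1 ≤ t)
    (hjoint : Q.map (fun ω => (signalObsHistory X Y t ω, Y t ω))
      = (P.map (signalObsHistory X Y t)).prod (gaussianReal 0 1))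
    (α lam : ℕ → ℝ) :
    ∫ ω, cexp (I * ↑(∑ j ∈ Icc 1 t, α j * X j ω + ∑ j ∈ Icc 1 t, lam j * Y j ω)) ∂Q
      = cexp (-↑(lam t ^ 2) / 2) *
        ∫ ω, cexp (I * ↑(∑ j ∈ Icc 1 t, α j * X j ω + ∑ j ∈ Icc 1 (t - 1), lam j * Y j ω)) ∂P := by
  have hIcc : ∀ f : ℕ → ℝ, ∑ j ∈ Icc 1 t, f j = ∑ j ∈ Icc 1 (t - 1), f j + f t := fun f => by
    obtain ⟨n, rfl⟩ : ∃ n, t = n + 1 := ⟨t - 1, by omega⟩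
    exact sum_Icc_succ_top (by omega) f
  let F : (Fin t → ℝ) × (Fin (t - 1) → ℝ) → ℂ := fun v =>
    cexp (I * ↑(∑ j : Fin t, α (j + 1) * v.1 j + ∑ j : Fin (t - 1), lam (j + 1) * v.2 j))
  have hF : ∀ ω, F (signalObsHistory X Y t ω)
      = cexp (I * ↑(∑ j ∈ Icc 1 t, α j * X j ω + ∑ j ∈ Icc 1 (t - 1), lam j * Y j ω)) :=
    fun ω => by simp only [F, signalObsHistory, sum_Icc_one_eq_sum_fin]
  have hgauss : ∫ y, cexp (I * ↑(lam t * y)) ∂gaussianReal 0 1 = cexp (-↑(lam t ^ 2) / 2) := by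
    calc _ = charFun (gaussianReal 0 1) (lam t) := by
          rw [charFun_apply_real]
          congr with y
          rw [ofReal_mul, mul_comm I]
      _ = _ := by
          rw [charFun_gaussianReal]
          push_cast
          ring_nf
  calc _ = ∫ ω, F (signalObsHistory X Y t ω) * cexp (I * ↑(lam t * Y t ω)) ∂Q := by
        refine integral_congr_ae (ae_of_all _ fun ω => ?_)
        dsimp only
        rw [hF, ← Complex.exp_add, hIcc fun j => lam j * Y j ω]
        push_cast
        ring_nf
    _ = (∫ ω, F (signalObsHistory X Y t ω) ∂P) * ∫ y, cexp (I * ↑(lam t * y)) ∂gaussianReal 0 1 :=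
        integral_mul_of_map_prodMk_eq_prod (H := fun y => cexp (I * ↑(lam t * y)))
          (measurable_signalObsHistory hX hY t) (hY t) hjoint (by fun_prop) (by fun_prop)
    _ = _ := by simp_rw [hgauss, hF, mul_comm]

end SignalObservation

theorem measure_change_characteristic_function_general
    {Ω : Type*} [MeasurableSpace Ω] (P : Measure Ω) [IsProbabilityMeasure P]
    (X ε Y : ℕ → Ω → ℝ) (A : ℕ → ℝ) (t : ℕ) (ht : 1 ≤ t)
    (hXmeas : ∀ t, Measurable (X t)) (hεmeas : ∀ t, Measurable (ε t))
    (hεlaw : ∀ t, P.map (ε t) = gaussianReal 0 1)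
    (hεindep : iIndepFun ε P)
    (hXε : IndepFun (fun ω => fun t => X t ω) (fun ω => fun t => ε t ω) P)
    (hY : ∀ t ω, Y t ω = A t * X t ω + ε t ω)
    -- the new probability measure `P̂`
    (Phat : Measure Ω)
    (hPhat : Phat = P.withDensity (fun ω =>
      ENNReal.ofReal (Real.exp (-(A t * X t ω * ε t ω) - 1 / 2 * A t ^ 2 * X t ω ^ 2)))) :
    (∀ α lam : ℕ → ℝ,
      ∫ ω, Complex.exp (Complex.I *
          ((↑(∑ j ∈ Finset.Icc 1 t, α j * X j ω + ∑ j ∈ Finset.Icc 1 t, lam j * Y j ω)) : ℂ))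
        ∂Phat
      = Complex.exp (-(((lam t : ℝ)) ^ 2 : ℝ) / 2) *
        ∫ ω, Complex.exp (Complex.I *
          ((↑(∑ j ∈ Finset.Icc 1 t, α j * X j ω
              + ∑ j ∈ Finset.Icc 1 (t - 1), lam j * Y j ω)) : ℂ)) ∂P) ∧
    Phat.map (fun ω =>
        ((fun j : Fin t => X (j.1 + 1) ω), (fun j : Fin (t - 1) => Y (j.1 + 1) ω)))
      = P.map (fun ω =>
        ((fun j : Fin t => X (j.1 + 1) ω), (fun j : Fin (t - 1) => Y (j.1 + 1) ω))) ∧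
    Phat.map (Y t) = gaussianReal 0 1 ∧
    IndepFun (fun ω =>
        ((fun j : Fin t => X (j.1 + 1) ω), (fun j : Fin (t - 1) => Y (j.1 + 1) ω)))
      (Y t) Phat := by
  have hYmeas := measurable_observation hXmeas hεmeas hY
  have hV := measurable_signalObsHistory hXmeas hYmeas t
  have hjoint : Phat.map (fun ω => (signalObsHistory X Y t ω, Y t ω))
      = (P.map (signalObsHistory X Y t)).prod (gaussianReal 0 1) := by
    rw [hPhat]
    exact map_signalObsHistory_prodMk_withDensity hXmeas hεmeas hεlaw hεindep hXε hY ht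
  have := Measure.isProbabilityMeasure_map (μ := P) hV.aemeasurable
  obtain ⟨hV_law, hY_law, hindep⟩ :=
    map_eq_and_indepFun_of_map_prodMk_eq_prod hV (hYmeas t) hjoint
  exact ⟨integral_cexp_of_map_signalObsHistory_prodMk_eq_prod hXmeas hYmeas ht hjoint,
    hV_law, hY_law, hindep⟩

/-- For the measure `P̂` with `dP̂/dP = exp(−A_t X_t ε_t − (1/2) A_t² X_t²)`, the joint
characteristic function satisfies
`E_P̂[exp{i ∑ α_j X_j + i ∑ λ_j Y_j}] = e^{−λ_t²/2} E_P[exp{i ∑ α_j X_j + i ∑_{j<t} λ_j Y_j}]`;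
consequently under `P̂` the law of `(X_1,…,X_t,Y_1,…,Y_{t−1})` is unchanged and `Y_t` is a
standard Gaussian independent of `(X_1,…,X_t,Y_1,…,Y_{t−1})`. -/
theorem measure_change_characteristic_function
    {Ω : Type*} [MeasurableSpace Ω] (P : Measure Ω) [IsProbabilityMeasure P]
    (X ε Y : ℕ → Ω → ℝ) (A m : ℕ → ℝ) (K : ℕ → ℕ → ℝ) (t : ℕ) (ht : 1 ≤ t)
    (hXmeas : ∀ t, Measurable (X t)) (hεmeas : ∀ t, Measurable (ε t))
    (hXgauss : IsGaussianProcess P X)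
    (hm : ∀ t, ∫ ω, X t ω ∂P = m t)
    (hK : ∀ t s, ∫ ω, (X t ω - m t) * (X s ω - m s) ∂P = K t s)
    (hεlaw : ∀ t, P.map (ε t) = gaussianReal 0 1)
    (hεindep : iIndepFun ε P)
    (hXε : IndepFun (fun ω => fun t => X t ω) (fun ω => fun t => ε t ω) P)
    (hY : ∀ t ω, Y t ω = A t * X t ω + ε t ω)
    -- the new probability measure `P̂`
    (Phat : Measure Ω)
    (hPhat : Phat = P.withDensity (fun ω =>
      ENNReal.ofReal (Real.exp (-(A t * X t ω * ε t ω) - 1 / 2 * A t ^ 2 * X t ω ^ 2)))) :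
    (∀ α lam : ℕ → ℝ,
      ∫ ω, Complex.exp (Complex.I *
          ((↑(∑ j ∈ Finset.Icc 1 t, α j * X j ω + ∑ j ∈ Finset.Icc 1 t, lam j * Y j ω)) : ℂ))
        ∂Phat
      = Complex.exp (-(((lam t : ℝ)) ^ 2 : ℝ) / 2) *
        ∫ ω, Complex.exp (Complex.I *
          ((↑(∑ j ∈ Finset.Icc 1 t, α j * X j ω
              + ∑ j ∈ Finset.Icc 1 (t - 1), lam j * Y j ω)) : ℂ)) ∂P) ∧
    Phat.map (fun ω =>
        ((fun j : Fin t => X (j.1 + 1) ω), (fun j : Fin (t - 1) => Y (j.1 + 1) ω)))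
      = P.map (fun ω =>
        ((fun j : Fin t => X (j.1 + 1) ω), (fun j : Fin (t - 1) => Y (j.1 + 1) ω))) ∧
    Phat.map (Y t) = gaussianReal 0 1 ∧
    IndepFun (fun ω =>
        ((fun j : Fin t => X (j.1 + 1) ω), (fun j : Fin (t - 1) => Y (j.1 + 1) ω)))
      (Y t) Phat :=
  measure_change_characteristic_function_general P X ε Y A t ht hXmeas hεmeas hεlaw hεindep hXε hY
    Phat hPhat
end

section
/- Let (a_t), (A_t) be real numbers, (D_t), (Q_t) nonnegative reals, μ a real number, and set S_l = A_l² − μQ_l. Suppose the scalar Riccati recursion γ̄_0 = 0, γ̄_s = D_s + a_s² γ̄_{s−1}/(1 + S_{s−1} γ̄_{s−1}) has a unique nonnegative solution with 1 + S_l γ̄_l > 0 for all l. Define k_0 = 0, k_t = a_t² k_{t−1} + D_t, and the covariance K(t,s) = (∏_{u=s+1}^{t} a_u) k_s for 1 ≤ s ≤ t. Then the function γ̄(t,s) := (∏_{u=s+1}^{t} a_u) γ̄_s satisfies the Volterra equation γ̄(t,s) = K(t,s) − Σ_{l=1}^{s−1} γ̄(t,l) γ̄(s,l) S_l/(1 +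 S_l γ̄_l) for all 1 ≤ s ≤ t. -/
/-!
Substituting the Riccati recursion, `γ̄_{n+1} = a_{n+1}² (γ̄_n − γ̄_n² c_n) + D_{n+1}` with
`c_n = S_n / (1 + S_n γ̄_n)`, and subtracting it from `k_{n+1} = a_{n+1}² k_n + D_{n+1}` shows that
`k_n − γ̄_n` accumulates the corrections: `k_n − γ̄_n = ∑_{l<n} (∏_{u=l+1}^n a_u)² γ̄_l² c_l`.
Multiplying by `∏_{u=s+1}^t a_u` and splitting the products at `s` gives the Volterra equation.
-/

open Finset

/-- The variance sequence `k_t` of the Gaussian AR(1) process: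
`k_0 = 0`, `k_t = a_t² k_{t−1} + D_t`. -/
def kseq (a D : ℕ → ℝ) : ℕ → ℝ
  | 0 => 0
  | t + 1 => a (t + 1) ^ 2 * kseq a D t + D (t + 1)

theorem prod_Icc_succ_mul_prod_Icc_succ {M : Type*} [CommMonoid M] (f : ℕ → M) {l s t : ℕ}
    (hls : l ≤ s) (hst : s ≤ t) :
    (∏ u ∈ Icc (l + 1) s, f u) * ∏ u ∈ Icc (s + 1) t, f u = ∏ u ∈ Icc (l + 1) t, f u := by
  simp only [Icc_add_one_left_eq_Ioc]
  exact prod_Ioc_consecutive f hls hst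

theorem kseq_sub_eq_sum {a D g r : ℕ → ℝ} (hg0 : g 0 = 0)
    (hg : ∀ n, g (n + 1) = a (n + 1) ^ 2 * (g n - r n) + D (n + 1)) (n : ℕ) :
    kseq a D n - g n = ∑ l ∈ range n, (∏ u ∈ Icc (l + 1) n, a u) ^ 2 * r l := by
  induction n with
  | zero => simp [kseq, hg0]
  | succ n ih =>
    have hprod : ∀ l ∈ range n, (∏ u ∈ Icc (l + 1) (n + 1), a u) ^ 2 * r l
        = a (n + 1) ^ 2 * ((∏ u ∈ Icc (l + 1) n, a u) ^ 2 * r l) := fun l hl => by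
      rw [prod_Icc_succ_top (by linarith [mem_range.1 hl])]
      ring
    rw [sum_range_succ, sum_congr rfl hprod, ← mul_sum, ← ih, kseq, hg, Icc_self,
      prod_singleton]
    ring

theorem riccati_step_eq {a D S g : ℝ} (h : 1 + S * g ≠ 0) :
    D + a ^ 2 * g / (1 + S * g) = a ^ 2 * (g - g ^ 2 * (S / (1 + S * g))) + D := by
  have hg : g * (1 + S * g) / (1 + S * g) = g := mul_div_cancel_right₀ g h
  linear_combination a ^ 2 * hg

theorem AR1_Riccati_solves_Volterra_general
    (a D : ℕ → ℝ) (S : ℕ → ℝ)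
    (g : ℕ → ℝ)
    (hg0 : g 0 = 0)
    (hgrec : ∀ s, 1 ≤ s → g s = D s + a s ^ 2 * g (s - 1) / (1 + S (s - 1) * g (s - 1)))
    (hgden : ∀ l, 0 < 1 + S l * g l)
    (K : ℕ → ℕ → ℝ)
    (hK : ∀ s t, 1 ≤ s → s ≤ t → K t s = (∏ u ∈ Finset.Icc (s + 1) t, a u) * kseq a D s)
    (Γ : ℕ → ℕ → ℝ)
    (hΓ : ∀ s t, Γ t s = (∏ u ∈ Finset.Icc (s + 1) t, a u) * g s) :
    ∀ s t, 1 ≤ s → s ≤ t →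
      Γ t s = K t s - ∑ l ∈ Finset.Icc 1 (s - 1),
        Γ t l * Γ s l * (S l / (1 + S l * g l)) := by
  intro s t hs hst
  have hrec : ∀ n, g (n + 1) =
      a (n + 1) ^ 2 * (g n - g n ^ 2 * (S n / (1 + S n * g n))) + D (n + 1) := fun n => by rw [hgrec (n + 1) n.succ_pos, Nat.add_sub_cancel, riccati_step_eq (hgden n).ne']
  have hsum : ∑ l ∈ Icc 1 (s - 1), Γ t l * Γ s l * (S l / (1 + S l * g l))
      = (∏ u ∈ Icc (s + 1) t, a u) * (kseq a D s - g s) := calc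
    _ = ∑ l ∈ range s, Γ t l * Γ s l * (S l / (1 + S l * g l)) := by
      refine sum_subset (fun l hl => mem_range.2 (by rw [mem_Icc] at hl; omega))
        fun l hl hl' => ?_
      obtain rfl : l = 0 := by
        rw [mem_range] at hl
        rw [mem_Icc] at hl'
        omega
      simp [hΓ 0 s, hg0]
    _ = ∑ l ∈ range s, (∏ u ∈ Icc (s + 1) t, a u) *
          ((∏ u ∈ Icc (l + 1) s, a u) ^ 2 * (g l ^ 2 * (S l / (1 + S l * g l)))) :=
      sum_congr rfl fun l hl => by
        rw [hΓ, hΓ, ← prod_Icc_succ_mul_prod_Icc_succ a (mem_range.1 hl).le hst]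
        ring
    _ = _ := by rw [← mul_sum, kseq_sub_eq_sum hg0 hrec]
  rw [hsum, hΓ, hK s t hs hst]
  ring

/-- the Riccati solution generates the Volterra solution in the
AR(1) case.  If `γ̄_0 = 0`, `γ̄_s = D_s + a_s² γ̄_{s−1}/(1 + S_{s−1} γ̄_{s−1})` is the
unique nonnegative solution with `1 + S_l γ̄_l > 0`, then
`γ̄(t,s) = (∏_{u=s+1}^t a_u) γ̄_s` solves the Volterra equation
`γ̄(t,s) = K(t,s) − ∑_{l=1}^{s−1} γ̄(t,l) γ̄(s,l) S_l/(1 + S_l γ̄_l)` for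
`K(t,s) = (∏_{u=s+1}^t a_u) k_s`. -/
theorem AR1_Riccati_solves_Volterra
    (a A D Q : ℕ → ℝ) (μ : ℝ) (S : ℕ → ℝ)
    (hD : ∀ t, 0 ≤ D t) (hQ : ∀ t, 0 ≤ Q t)
    (hS : ∀ l, S l = A l ^ 2 - μ * Q l)
    (g : ℕ → ℝ)
    (hg0 : g 0 = 0)
    (hgrec : ∀ s, 1 ≤ s → g s = D s + a s ^ 2 * g (s - 1) / (1 + S (s - 1) * g (s - 1)))
    (hgnonneg : ∀ s, 0 ≤ g s)
    (hgden : ∀ l, 0 < 1 + S l * g l)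
    (hguniq : ∀ g' : ℕ → ℝ, g' 0 = 0 →
      (∀ s, 1 ≤ s → g' s = D s + a s ^ 2 * g' (s - 1) / (1 + S (s - 1) * g' (s - 1))) →
      (∀ s, 0 ≤ g' s) → g' = g)
    (K : ℕ → ℕ → ℝ)
    (hK : ∀ s t, 1 ≤ s → s ≤ t → K t s = (∏ u ∈ Finset.Icc (s + 1) t, a u) * kseq a D s)
    (Γ : ℕ → ℕ → ℝ)
    (hΓ : ∀ s t, Γ t s = (∏ u ∈ Finset.Icc (s + 1) t, a u) * g s) :
    ∀ s t, 1 ≤ s → s ≤ t →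
      Γ t s = K t s - ∑ l ∈ Finset.Icc 1 (s - 1),
        Γ t l * Γ s l * (S l / (1 + S l * g l)) :=
  AR1_Riccati_solves_Volterra_general a D S g hg0 hgrec hgden K hK Γ hΓ
end
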